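/- arXiv:1911.03764 — 5 statements merged into one kernel-verified Lean document; each statement's English description precedes it below -/
import Mathlib

section
/- Let T ≥ 1 and define f(ω) = Σ_{t=1}^T ω_t² − (1/T)(Σ_{t=1}^T ω_t)² + 2 Σ_{t=1}^T ((T+1−2t)/T) ω_t for ω ∈ ℝ^T. Then the vector ω* with ω*_t = (2t−1−T)/T satisfies f(ω*) ≤ f(ω) for all ω ∈ ℝ^T with −1 ≤ ω_t ≤ 1 and ω_t ≤ ω_{t+1} for all t. Moreover ω* itself satisfies these constraints. -/
open Finset

/-- The convex-relaxed variance objective for a `T`-period staggered rollout: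
`f(ω) = Σ_t ω_t² − (1/T)(Σ_t ω_t)² + 2 Σ_t ((T+1−2t)/T) ω_t`,
where the time index `t : Fin T` corresponds to period `t+1`. -/
noncomputable def fobj (T : ℕ) (ω : Fin T → ℝ) : ℝ :=
  (∑ t, ω t ^ 2) - (1 / (T : ℝ)) * (∑ t, ω t) ^ 2
    + 2 * ∑ t : Fin T, (((T : ℝ) + 1 - 2 * (((t : ℕ) : ℝ) + 1)) / (T : ℝ)) * ω t

/-- The candidate optimal profile `ω*_t = (2t−1−T)/T` (period `t = t.val + 1`). -/
noncomputable def omegaStar (T : ℕ) (t : Fin T) : ℝ :=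
  (2 * (((t : ℕ) : ℝ) + 1) - 1 - (T : ℝ)) / (T : ℝ)

/-
`f(ω) = q(ω) − 2⟨ω*, ω⟩`, where `q(g) = Σ g² − (Σ g)²/T` is the centred sum of squares.
Since `Σ ω* = 0`, the polar form of `q` at `ω*` is the plain inner product, so completing
the square gives `f(ω) = q(ω − ω*) − Σ ω*²`; and `q ≥ 0` by Cauchy–Schwarz. Hence `ω*` is
the minimiser of `f` over all of `ℝ^T`.
-/

section CenteredQuadratic

variable {ι : Type*} [Fintype ι]

noncomputable def centeredQuadraticObjective (a ω : ι → ℝ) : ℝ :=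
  ∑ i, ω i ^ 2 - (Fintype.card ι : ℝ)⁻¹ * (∑ i, ω i) ^ 2 - 2 * ∑ i, a i * ω i

theorem inv_card_mul_sq_sum_le_sum_sq (g : ι → ℝ) :
    (Fintype.card ι : ℝ)⁻¹ * (∑ i, g i) ^ 2 ≤ ∑ i, g i ^ 2 := by
  rcases Nat.eq_zero_or_pos (Fintype.card ι) with hcard | hcard
  · simpa [hcard] using sum_nonneg fun i _ => sq_nonneg (g i)
  · rw [inv_mul_le_iff₀ (by exact_mod_cast hcard)]
    simpa using sq_sum_le_card_mul_sum_sq (s := univ) (f := g)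

theorem centeredQuadraticObjective_eq_of_sum_eq_zero {a : ι → ℝ} (ha : ∑ i, a i = 0)
    (ω : ι → ℝ) :
    centeredQuadraticObjective a ω =
      ∑ i, (ω i - a i) ^ 2 - (Fintype.card ι : ℝ)⁻¹ * (∑ i, (ω i - a i)) ^ 2
        - ∑ i, a i ^ 2 := by
  have hsq : ∑ i, (ω i - a i) ^ 2 = ∑ i, ω i ^ 2 - 2 * ∑ i, a i * ω i + ∑ i, a i ^ 2 := by
    rw [mul_sum, ← sum_sub_distrib, ← sum_add_distrib]
    exact sum_congr rfl fun i _ => by ring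
  rw [centeredQuadraticObjective, hsq, sum_sub_distrib, ha, sub_zero]
  ring

theorem centeredQuadraticObjective_le_of_sum_eq_zero {a : ι → ℝ} (ha : ∑ i, a i = 0)
    (ω : ι → ℝ) : centeredQuadraticObjective a a ≤ centeredQuadraticObjective a ω := by
  rw [centeredQuadraticObjective_eq_of_sum_eq_zero ha,
    centeredQuadraticObjective_eq_of_sum_eq_zero ha]
  have hq := inv_card_mul_sq_sum_le_sum_sq fun i => ω i - a i
  simp only [sub_self, zero_pow two_ne_zero, sum_const_zero, mul_zero]
  linarith

end CenteredQuadratic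

theorem omegaStar_rev (T : ℕ) (t : Fin T) : omegaStar T t.rev = -omegaStar T t := by
  have hrev : ((t.rev : ℕ) : ℝ) = T - (t + 1) := by
    rw [Fin.val_rev, Nat.cast_sub (by omega)]
    push_cast
    ring
  rw [omegaStar, omegaStar, hrev]
  ring

theorem sum_omegaStar (T : ℕ) : ∑ t, omegaStar T t = 0 := by
  have h : ∑ t, omegaStar T t = -∑ t, omegaStar T t :=
    calc ∑ t, omegaStar T t = ∑ t : Fin T, omegaStar T t.rev :=
        (Equiv.sum_comp Fin.revPerm _).symm
      _ = -∑ t, omegaStar T t := by simp only [omegaStar_rev, sum_neg_distrib]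
  linarith

theorem fobj_eq_centeredQuadraticObjective (T : ℕ) :
    fobj T = centeredQuadraticObjective (omegaStar T) := by
  ext ω
  have hcoeff : ∀ t : Fin T,
      ((T : ℝ) + 1 - 2 * (((t : ℕ) : ℝ) + 1)) / (T : ℝ) = -omegaStar T t := fun t => by
    rw [omegaStar]
    ring
  simp only [fobj, centeredQuadraticObjective, hcoeff, Fintype.card_fin, one_div, neg_mul,
    sum_neg_distrib]
  ring

theorem omegaStar_mem_Icc (T : ℕ) (t : Fin T) : omegaStar T t ∈ Set.Icc (-1) 1 := by
  have hT : (0 : ℝ) < T := by exact_mod_cast t.pos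
  have ht : ((t : ℕ) : ℝ) + 1 ≤ T := by exact_mod_cast t.isLt
  have ht0 : (0 : ℝ) ≤ (t : ℕ) := Nat.cast_nonneg _
  rw [Set.mem_Icc, omegaStar, le_div_iff₀ hT, div_le_one hT]
  constructor <;> linarith

theorem monotone_omegaStar (T : ℕ) : Monotone (omegaStar T) := fun a b hab => by
  have : ((a : ℕ) : ℝ) ≤ (b : ℕ) := by exact_mod_cast hab
  unfold omegaStar
  gcongr

theorem optimal_design_two_way_fixed_effects_general (T : ℕ) :
    ((∀ t, -1 ≤ omegaStar T t ∧ omegaStar T t ≤ 1) ∧ Monotone (omegaStar T)) ∧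
      ∀ ω : Fin T → ℝ, (∀ t, -1 ≤ ω t ∧ ω t ≤ 1) → Monotone ω →
        fobj T (omegaStar T) ≤ fobj T ω := by
  refine ⟨⟨omegaStar_mem_Icc T, monotone_omegaStar T⟩, fun ω _ _ => ?_⟩
  rw [fobj_eq_centeredQuadraticObjective]
  exact centeredQuadraticObjective_le_of_sum_eq_zero (sum_omegaStar T) ω

theorem optimal_design_two_way_fixed_effects (T : ℕ) (hT : 1 ≤ T) :
    ((∀ t, -1 ≤ omegaStar T t ∧ omegaStar T t ≤ 1) ∧ Monotone (omegaStar T)) ∧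
      ∀ ω : Fin T → ℝ, (∀ t, -1 ≤ ω t ∧ ω t ≤ 1) → Monotone ω →
        fobj T (omegaStar T) ≤ fobj T ω :=
  optimal_design_two_way_fixed_effects_general T
end

section
/- Let Z ∈ {−1,1}^{N×T} satisfy z_{it} ≤ z_{i,t+1} for all i, t (irreversible adoption). Let ω_t = (1/N)Σ_i z_{it} and ζ_i = (1/T)Σ_t z_{it}. Then Σ_{i=1}^N ζ_i² = (2N/T) Σ_{t=1}^T ((T+1−2t)/T) ω_t + N, where the sum on the right equals N[1 + (2/T)Σ_t ((T+1−2t)/T)ω_t]. In particular, given (ω_1,…,ω_T), the value Σ_i ζ_i² is uniquely determined. -/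
/-!
For a single unit with monotone `±1` path `f` over `n` periods (indexed from `0`),
`(∑ t, f t) ^ 2 = n ^ 2 + 2 ∑ t, (n - 1 - 2 t) f t`: the right side is linear in `f`.
By induction on `n`, appending a `+1` changes both sides compatibly, while a path ending in `-1`
is constantly `-1`. Summing this identity over the units and exchanging the order of summation
expresses `∑ i, ζ i ^ 2` through the cross-sectional sums `∑ i, z i t = N ω_t` alone.
-/

open Finset

section
variable {R : Type*} [CommRing R] [LinearOrder R] [IsStrictOrderedRing R]

lemma Fin.eq_neg_one_of_monotone_of_apply_last {n : ℕ} {f : Fin (n + 1) → R}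
    (hf : ∀ t, f t = 1 ∨ f t = -1) (hmono : Monotone f) (hlast : f (Fin.last n) = -1)
    (t : Fin (n + 1)) : f t = -1 := by
  refine (hf t).resolve_left fun h => ?_
  have := hmono (Fin.le_last t)
  rw [h, hlast] at this
  linarith

theorem sq_sum_eq_of_monotone_of_eq_one_or_eq_neg_one :
    ∀ {n : ℕ} (f : Fin n → R), (∀ t, f t = 1 ∨ f t = -1) → Monotone f →
      (∑ t, f t) ^ 2 = (n : R) ^ 2 + 2 * ∑ t : Fin n, ((n : R) - 1 - 2 * (t : ℕ)) * f t
  | 0, _, _, _ => by simp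
  | n + 1, f, hf, hmono => by
    have ih := sq_sum_eq_of_monotone_of_eq_one_or_eq_neg_one (fun i : Fin n => f i.castSucc)
      (fun i => hf _) (hmono.comp Fin.strictMono_castSucc.monotone)
    have hweight : ∑ i : Fin n, ((n + 1 : ℕ) - 1 - 2 * (i : ℕ) : R) * f i.castSucc
        = ∑ i : Fin n, ((n : R) - 1 - 2 * (i : ℕ)) * f i.castSucc + ∑ i : Fin n, f i.castSucc := by
      rw [← sum_add_distrib]
      exact sum_congr rfl fun i _ => by push_cast; ring
    rw [Fin.sum_univ_castSucc, Fin.sum_univ_castSucc]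
    simp only [Fin.val_castSucc, Fin.val_last, hweight]
    rcases hf (Fin.last n) with hlast | hlast
    · rw [hlast]
      push_cast
      linear_combination ih
    · have hsum : ∑ i : Fin n, f i.castSucc = -n := by
        simp [Fin.eq_neg_one_of_monotone_of_apply_last hf hmono hlast]
      simp only [hsum, hlast] at ih ⊢
      push_cast
      -- with `∑ f = -n`, the induction hypothesis says the weighted sum vanishes
      linear_combination ih

end

/-- Under the irreversible (monotone) adoption pattern with `z_{it} ∈ {−1,1}`, the sum of
squared time-series averages `Σ_i ζ_i²` is determined by the cross-sectional averages:
`Σ_i ζ_i² = (2N/T) Σ_t ((T+1−2t)/T) ω_t + N`. -/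
theorem sum_sq_time_averages_determined (N T : ℕ) (hT : 0 < T)
    (z : Fin N → Fin T → ℝ)
    (hz : ∀ i t, z i t = 1 ∨ z i t = -1)
    (hmono : ∀ i, Monotone (z i)) :
    ∑ i : Fin N, ((1 / (T : ℝ)) * ∑ t, z i t) ^ 2
      = (2 * (N : ℝ) / (T : ℝ))
          * (∑ t : Fin T, (((T : ℝ) + 1 - 2 * (((t : ℕ) : ℝ) + 1)) / (T : ℝ))
              * ((1 / (N : ℝ)) * ∑ i, z i t))
        + (N : ℝ) := by
  rcases N.eq_zero_or_pos with rfl | hN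
  · simp
  have hNr : (N : ℝ) ≠ 0 := by positivity
  have hTr : (T : ℝ) ≠ 0 := by positivity
  simp_rw [mul_pow, fun i => sq_sum_eq_of_monotone_of_eq_one_or_eq_neg_one (z i) (hz i) (hmono i),
    mul_add, sum_add_distrib, mul_sum, sum_const, card_univ, Fintype.card_fin]
  rw [sum_comm, add_comm]
  congr 1
  · exact sum_congr rfl fun t _ => sum_congr rfl fun i _ => by field_simp; ring
  · simp [hTr]
end

section
/- (Unit fixed effects only) In the model Y_{it} = α_i + τ z_{it} + ε_{it} with Γ = 𝟙_T ⊗ I_N, the quantity zᵀΓ(ΓᵀΓ)^{-1}Γᵀz equals T Σ_{i=1}^N ζ_i² where ζ_i = (1/T)Σ_t z_{it}. Under the monotone adoption constraint z_{it} ≤ z_{i,t+1}, this is minimized exactly when every unit switches to treatment at the halfway point: ω_t = −1 for t < (T+1)/2 and ω_t = 1 for t > (T+1)/2. -/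
open Finset Matrix

/-- The design matrix `Γ = 𝟙_T ⊗ I_N` of one-hot unit indicators
(rows indexed by `(t, i)`, columns by unit `i`). -/
noncomputable def GammaUnit (N T : ℕ) : Matrix (Fin T × Fin N) (Fin N) ℝ :=
  Matrix.of fun q i => if q.2 = i then 1 else 0

/-- The quadratic form `wᵀΓ(ΓᵀΓ)⁻¹Γᵀw` for the unit-fixed-effects design matrix. -/
noncomputable def unitQF (N T : ℕ) (w : Fin T × Fin N → ℝ) : ℝ :=
  w ⬝ᵥ (GammaUnit N T * ((GammaUnit N T)ᵀ * GammaUnit N T)⁻¹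
      * (GammaUnit N T)ᵀ).mulVec w

/-! The Gram matrix `ΓᵀΓ` is `T • 1`, so the quadratic form is `T⁻¹ Σᵢ Sᵢ²`, where `Sᵢ` is the
column sum of unit `i`. A sum of `T` signs has the parity of `T`, hence `Sᵢ² ≥ T % 2` with
equality iff `|Sᵢ| ≤ 1`, and switching every unit at `T / 2` attains the bound in every column.
So a design is optimal iff `|Sᵢ| ≤ 1` for all `i`. For a monotone column this pins the number of
untreated periods to `⌊T/2⌋` or `⌈T/2⌉`, i.e. the unit switches at halftime; and a mean of signs
is `±1` only if every sign is, which carries the condition over to `ω`. -/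

lemma GammaUnit_transpose_mul_self (N T : ℕ) :
    (GammaUnit N T)ᵀ * GammaUnit N T = (T : ℝ) • 1 := by
  ext i j
  rcases eq_or_ne i j with rfl | hij
  · simp [GammaUnit, mul_apply, Fintype.sum_prod_type]
  · simp [GammaUnit, mul_apply, Fintype.sum_prod_type, hij, hij.symm]

lemma GammaUnit_transpose_mulVec_apply (N T : ℕ) (w : Fin T × Fin N → ℝ) (i : Fin N) :
    ((GammaUnit N T)ᵀ *ᵥ w) i = ∑ t, w (t, i) := by
  simp [GammaUnit, mulVec, dotProduct, Fintype.sum_prod_type]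

lemma unitQF_eq {N T : ℕ} (hT : 0 < T) (w : Fin T × Fin N → ℝ) :
    unitQF N T w = (T : ℝ)⁻¹ * ∑ i, (∑ t, w (t, i)) ^ 2 := by
  have hinv : ((GammaUnit N T)ᵀ * GammaUnit N T)⁻¹ = (T : ℝ)⁻¹ • 1 := by
    rw [GammaUnit_transpose_mul_self]
    refine inv_eq_left_inv ?_
    rw [smul_mul_smul, one_mul, inv_mul_cancel₀ (by positivity), one_smul]
  rw [unitQF, hinv, Matrix.mul_smul, Matrix.mul_one, Matrix.smul_mul, smul_mulVec,
    dotProduct_smul, smul_eq_mul, ← mulVec_mulVec, dotProduct_mulVec, ← mulVec_transpose]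
  simp [dotProduct, GammaUnit_transpose_mulVec_apply, sq]

lemma sq_sub_two_mul_eq_mod_two {n k : ℕ} (h : |(n : ℝ) - 2 * k| ≤ 1) :
    ((n : ℝ) - 2 * k) ^ 2 = (n % 2 : ℕ) := by
  rw [abs_le] at h
  have h₁ : n ≤ 2 * k + 1 := by exact_mod_cast (by linarith : (n : ℝ) ≤ 2 * k + 1)
  have h₂ : 2 * k ≤ n + 1 := by exact_mod_cast (by linarith : (2 * k : ℝ) ≤ n + 1)
  rcases (by omega : (n = 2 * k ∧ n % 2 = 0) ∨ (n = 2 * k + 1 ∧ n % 2 = 1) ∨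
      (n + 1 = 2 * k ∧ n % 2 = 1)) with ⟨hn, hm⟩ | ⟨hn, hm⟩ | ⟨hn, hm⟩
  · rw [show (n : ℝ) - 2 * k = 0 by rw [hn]; push_cast; ring, hm]; norm_num
  · rw [show (n : ℝ) - 2 * k = 1 by rw [hn]; push_cast; ring, hm]; norm_num
  · have hn : (n : ℝ) + 1 = 2 * k := by exact_mod_cast hn
    rw [show (n : ℝ) - 2 * k = -1 by linarith, hm]; norm_num

lemma mod_two_lt_sq_sub_two_mul {n k : ℕ} (h : 1 < |(n : ℝ) - 2 * k|) :
    ((n % 2 : ℕ) : ℝ) < ((n : ℝ) - 2 * k) ^ 2 := by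
  have hm : ((n % 2 : ℕ) : ℝ) ≤ 1 := by exact_mod_cast Nat.le_of_lt_succ (Nat.mod_lt n two_pos)
  rw [← sq_abs]
  suffices 2 ≤ |(n : ℝ) - 2 * k| by nlinarith
  rcases lt_abs.mp h with h | h
  · have : 2 * k + 2 ≤ n := by exact_mod_cast (by linarith : (2 * k + 1 : ℝ) < n)
    have : (2 * k + 2 : ℝ) ≤ n := by exact_mod_cast this
    exact le_abs.mpr (Or.inl (by linarith))
  · have : n + 2 ≤ 2 * k := by exact_mod_cast (by linarith : (n + 1 : ℝ) < 2 * k)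
    have : (n + 2 : ℝ) ≤ 2 * k := by exact_mod_cast this
    exact le_abs.mpr (Or.inr (by linarith))

section SignVector

variable {ι : Type*} [Fintype ι] {v : ι → ℝ}

lemma sum_eq_card_sub_two_mul_card_neg (hv : ∀ i, v i = 1 ∨ v i = -1) :
    ∑ i, v i = Fintype.card ι - 2 * #{i | v i = -1} := by
  have hv' : ∀ i, v i = 1 - 2 * if v i = -1 then 1 else 0 := fun i => by
    rcases hv i with h | h <;> norm_num [h]
  rw [sum_congr rfl fun i _ => hv' i, sum_sub_distrib, ← mul_sum,
    sum_boole]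
  simp

lemma abs_sum_le_one_iff (hv : ∀ i, v i = 1 ∨ v i = -1) :
    |∑ i, v i| ≤ 1 ↔
      Fintype.card ι ≤ 2 * #{i | v i = -1} + 1 ∧ 2 * #{i | v i = -1} ≤ Fintype.card ι + 1 := by
  rw [sum_eq_card_sub_two_mul_card_neg hv, abs_le]
  set k := #{i | v i = -1}
  set n := Fintype.card ι
  have h₁ : (n : ℝ) ≤ 2 * k + 1 ↔ n ≤ 2 * k + 1 := by norm_cast
  have h₂ : (2 * k : ℝ) ≤ n + 1 ↔ 2 * k ≤ n + 1 := by norm_cast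
  rw [← h₁, ← h₂]
  constructor <;> rintro ⟨_, _⟩ <;> constructor <;> linarith

lemma mod_two_le_sq_sum (hv : ∀ i, v i = 1 ∨ v i = -1) :
    ((Fintype.card ι % 2 : ℕ) : ℝ) ≤ (∑ i, v i) ^ 2 := by
  rw [sum_eq_card_sub_two_mul_card_neg hv]
  rcases le_or_gt |(Fintype.card ι : ℝ) - 2 * #{i | v i = -1}| 1 with h | h
  · exact (sq_sub_two_mul_eq_mod_two h).ge
  · exact (mod_two_lt_sq_sub_two_mul h).le

lemma sq_sum_le_mod_two_iff (hv : ∀ i, v i = 1 ∨ v i = -1) :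
    (∑ i, v i) ^ 2 ≤ ((Fintype.card ι % 2 : ℕ) : ℝ) ↔ |∑ i, v i| ≤ 1 := by
  rw [sum_eq_card_sub_two_mul_card_neg hv]
  refine ⟨fun h => ?_, fun h => (sq_sub_two_mul_eq_mod_two h).le⟩
  by_contra h'
  exact (mod_two_lt_sq_sub_two_mul (not_le.mp h')).not_ge h

lemma mean_eq_iff_forall_eq [Nonempty ι] (hv : ∀ i, v i = 1 ∨ v i = -1) {c : ℝ}
    (hc : c = 1 ∨ c = -1) :
    1 / (Fintype.card ι : ℝ) * ∑ i, v i = c ↔ ∀ i, v i = c := by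
  have hcard : (Fintype.card ι : ℝ) ≠ 0 := by positivity
  have hsum : ∑ i, v i = Fintype.card ι * c ↔ ∑ i, v i = ∑ _i : ι, c := by
    rw [sum_const, card_univ, nsmul_eq_mul]
  rw [one_div_mul_eq_div, div_eq_iff hcard, mul_comm c, hsum]
  rcases hc with rfl | rfl
  · simpa using sum_eq_sum_iff_of_le (s := univ) (g := fun _ => 1) fun i _ =>
      (hv i).elim le_of_eq fun h => by rw [h]; norm_num
  · simpa [eq_comm] using sum_eq_sum_iff_of_le (s := univ) (g := v) fun i _ =>
      (hv i).elim (fun h => by rw [h]; norm_num) ge_of_eq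

end SignVector

/-- Times are counted from `0`: the condition at `t : Fin T` is the paper's condition at time
`t + 1`. -/
def SwitchesAtHalftime (T : ℕ) (v : Fin T → ℝ) : Prop :=
  ∀ t : Fin T, (2 * ((t : ℕ) + 1) < T + 1 → v t = -1) ∧ (T + 1 < 2 * ((t : ℕ) + 1) → v t = 1)

section Halftime

variable {T : ℕ} {v : Fin T → ℝ}

lemma SwitchesAtHalftime.abs_sum_le_one (hv : ∀ t, v t = 1 ∨ v t = -1)
    (h : SwitchesAtHalftime T v) : |∑ t, v t| ≤ 1 := by
  have hlo : #{t : Fin T | (t : ℕ) < T / 2} ≤ #{t | v t = -1} :=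
    card_le_card fun t ht => by
      simp only [mem_filter, mem_univ, true_and] at ht ⊢
      exact (h t).1 (by omega)
  have hhi : #{t | v t = -1} ≤ #{t : Fin T | (t : ℕ) < (T + 1) / 2} :=
    card_le_card fun t ht => by
      simp only [mem_filter, mem_univ, true_and] at ht ⊢
      by_contra hlt
      have := (h t).2 (by omega)
      linarith
  rw [Fin.card_filter_val_lt] at hlo hhi
  rw [abs_sum_le_one_iff hv, Fintype.card_fin]
  omega

lemma switchesAtHalftime_of_abs_sum_le_one (hv : ∀ t, v t = 1 ∨ v t = -1) (hmono : Monotone v)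
    (h : |∑ t, v t| ≤ 1) : SwitchesAtHalftime T v := by
  rw [abs_sum_le_one_iff hv, Fintype.card_fin] at h
  refine fun t => ⟨fun ht => (hv t).resolve_left fun ht₁ => ?_,
    fun ht => (hv t).resolve_right fun ht₁ => ?_⟩
  · have : #{s | v s = -1} ≤ #{s : Fin T | (s : ℕ) < t} :=
      card_le_card fun s hs => by
        simp only [mem_filter, mem_univ, true_and] at hs ⊢
        by_contra hts
        have := hmono (not_lt.mp hts : t ≤ s)
        linarith
    rw [Fin.card_filter_val_lt] at this
    omega
  · have : #{s : Fin T | (s : ℕ) < t + 1} ≤ #{s | v s = -1} :=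
      card_le_card fun s hs => by
        simp only [mem_filter, mem_univ, true_and] at hs ⊢
        have := hmono (Nat.lt_succ_iff.mp hs : s ≤ t)
        exact (hv s).resolve_left fun hs₁ => by linarith
    rw [Fin.card_filter_val_lt] at this
    omega

lemma switchesAtHalftime_iff_abs_sum_le_one (hv : ∀ t, v t = 1 ∨ v t = -1) (hmono : Monotone v) :
    SwitchesAtHalftime T v ↔ |∑ t, v t| ≤ 1 :=
  ⟨SwitchesAtHalftime.abs_sum_le_one hv, switchesAtHalftime_of_abs_sum_le_one hv hmono⟩

end Halftime

def halftimeDesign (N T : ℕ) : Fin T × Fin N → ℝ :=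
  fun q => if (q.1 : ℕ) < T / 2 then -1 else 1

section Design

variable {N T : ℕ}

lemma halftimeDesign_eq_one_or_eq_neg_one (q : Fin T × Fin N) :
    halftimeDesign N T q = 1 ∨ halftimeDesign N T q = -1 := by
  unfold halftimeDesign
  split_ifs <;> simp

lemma monotone_halftimeDesign (i : Fin N) : Monotone fun t => halftimeDesign N T (t, i) := by
  intro s t (hst : (s : ℕ) ≤ t)
  simp only [halftimeDesign]
  split_ifs <;> norm_num
  omega

lemma switchesAtHalftime_halftimeDesign (i : Fin N) :
    SwitchesAtHalftime T fun t => halftimeDesign N T (t, i) := by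
  intro t
  simp only [halftimeDesign]
  constructor <;> intro ht <;> split_ifs <;> first | rfl | omega

lemma natCast_mul_mod_two_le_sum_sq {w : Fin T × Fin N → ℝ} (hw : ∀ q, w q = 1 ∨ w q = -1) :
    (N : ℝ) * (T % 2 : ℕ) ≤ ∑ i, (∑ t, w (t, i)) ^ 2 := by
  simpa using sum_le_sum fun i (_ : i ∈ univ) => mod_two_le_sq_sum fun t => hw (t, i)

lemma sum_sq_le_natCast_mul_mod_two_iff {w : Fin T × Fin N → ℝ} (hw : ∀ q, w q = 1 ∨ w q = -1) :
    ∑ i, (∑ t, w (t, i)) ^ 2 ≤ (N : ℝ) * (T % 2 : ℕ) ↔ ∀ i, |∑ t, w (t, i)| ≤ 1 := by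
  have hcol i := mod_two_le_sq_sum fun t => hw (t, i)
  have hcol_iff i := sq_sum_le_mod_two_iff fun t => hw (t, i)
  simp only [Fintype.card_fin] at hcol hcol_iff
  simp only [← hcol_iff]
  constructor
  · intro h i
    have hsum : ∑ _i : Fin N, ((T % 2 : ℕ) : ℝ) = ∑ i, (∑ t, w (t, i)) ^ 2 :=
      le_antisymm (sum_le_sum fun i _ => hcol i) (by simpa using h)
    exact ((sum_eq_sum_iff_of_le fun i _ => hcol i).mp hsum i (mem_univ i)).ge
  · intro h
    simpa using sum_le_sum fun i (_ : i ∈ univ) => h i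

lemma forall_unitQF_le_iff (hT : 0 < T) {z : Fin T × Fin N → ℝ}
    (hz : ∀ q, z q = 1 ∨ z q = -1) :
    (∀ z' : Fin T × Fin N → ℝ, (∀ q, z' q = 1 ∨ z' q = -1) →
        (∀ i : Fin N, Monotone fun t => z' (t, i)) → unitQF N T z ≤ unitQF N T z') ↔
      ∀ i, |∑ t, z (t, i)| ≤ 1 := by
  have hT' : (0 : ℝ) < (T : ℝ)⁻¹ := by positivity
  simp only [unitQF_eq hT]
  rw [← sum_sq_le_natCast_mul_mod_two_iff hz]
  constructor
  · intro h
    have hhalf := (sum_sq_le_natCast_mul_mod_two_iff (w := halftimeDesign N T)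
      halftimeDesign_eq_one_or_eq_neg_one).mpr fun i =>
        (switchesAtHalftime_halftimeDesign i).abs_sum_le_one
          fun t => halftimeDesign_eq_one_or_eq_neg_one (t, i)
    have hle := h _ halftimeDesign_eq_one_or_eq_neg_one monotone_halftimeDesign
    exact (le_of_mul_le_mul_left hle hT').trans hhalf
  · intro h z' hz' _
    exact mul_le_mul_of_nonneg_left (h.trans (natCast_mul_mod_two_le_sum_sq hz')) hT'.le

lemma switchesAtHalftime_mean_iff (hN : 0 < N) {z : Fin T × Fin N → ℝ}
    (hz : ∀ q, z q = 1 ∨ z q = -1) :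
    SwitchesAtHalftime T (fun t => 1 / (N : ℝ) * ∑ i, z (t, i)) ↔
      ∀ i, SwitchesAtHalftime T fun t => z (t, i) := by
  have : Nonempty (Fin N) := ⟨⟨0, hN⟩⟩
  have hmean c (hc : c = 1 ∨ c = -1) t :
      1 / (N : ℝ) * ∑ i, z (t, i) = c ↔ ∀ i, z (t, i) = c := by
    simpa using mean_eq_iff_forall_eq (fun i => hz (t, i)) hc
  simp only [SwitchesAtHalftime, hmean 1 (Or.inl rfl), hmean (-1) (Or.inr rfl)]
  constructor
  · exact fun h i t => ⟨fun ht => (h t).1 ht i, fun ht => (h t).2 ht i⟩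
  · exact fun h t => ⟨fun ht i => (h i t).1 ht, fun ht i => (h i t).2 ht⟩

end Design

/-- Unit fixed effects only: `zᵀΓ(ΓᵀΓ)⁻¹Γᵀz = T Σ_i ζ_i²`, and under the monotone
adoption constraint this is minimized exactly when every unit switches at halftime:
`ω_t = −1` for `t < (T+1)/2` and `ω_t = 1` for `t > (T+1)/2`. -/
theorem unit_fixed_effects_objective (N T : ℕ) (hN : 0 < N) (hT : 0 < T)
    (z : Fin T × Fin N → ℝ) (hz : ∀ q, z q = 1 ∨ z q = -1)
    (hmono : ∀ i : Fin N, Monotone fun t => z (t, i))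
    (ζ : Fin N → ℝ) (hζ : ∀ i, ζ i = (1 / (T : ℝ)) * ∑ t, z (t, i))
    (ω : Fin T → ℝ) (hω : ∀ t, ω t = (1 / (N : ℝ)) * ∑ i, z (t, i)) :
    unitQF N T z = (T : ℝ) * ∑ i, ζ i ^ 2 ∧
      ((∀ z' : Fin T × Fin N → ℝ, (∀ q, z' q = 1 ∨ z' q = -1) →
          (∀ i : Fin N, Monotone fun t => z' (t, i)) → unitQF N T z ≤ unitQF N T z')
        ↔ ∀ t : Fin T, (2 * ((t : ℕ) + 1) < T + 1 → ω t = -1) ∧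
            (T + 1 < 2 * ((t : ℕ) + 1) → ω t = 1)) := by
  refine ⟨?_, ?_⟩
  · rw [unitQF_eq hT, mul_sum, mul_sum]
    refine sum_congr rfl fun i _ => ?_
    rw [hζ i]
    field_simp
  · obtain rfl : ω = fun t => 1 / (N : ℝ) * ∑ i, z (t, i) := funext hω
    rw [forall_unitQF_le_iff hT hz]
    change _ ↔ SwitchesAtHalftime T _
    rw [switchesAtHalftime_mean_iff hN hz]
    exact forall_congr' fun i =>
      (switchesAtHalftime_iff_abs_sum_le_one (fun t => hz (t, i)) (hmono i)).symm
end

section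
/- (Reversible treatment, two-way fixed effects) In the model Y_{it} = α_i + β_t + τ z_{it} + ε_{it} with z_{it} ∈ {−1,1} and no monotonicity constraint, the OLS variance objective zᵀΓ(ΓᵀΓ)^{-1}Γᵀz = T Σ_i ζ_i² − (N/T)(Σ_t ω_t)² + N Σ_t ω_t² is minimized by any design with ω_t = 0 for all t and ζ_i = 0 for all i, where ω_t = (1/N)Σ_i z_{it} and ζ_i = (1/T)Σ_t z_{it}. -/
open Finset

/-- The OLS variance objective for the two-way fixed-effects model,
`Q(z) = T Σ_i ζ_i² − (N/T)(Σ_t ω_t)² + N Σ_t ω_t²`, where `ζ_i = (1/T)Σ_t z_{it}` and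
`ω_t = (1/N)Σ_i z_{it}`. -/
noncomputable def twoWayQF (N T : ℕ) (z : Fin N → Fin T → ℝ) : ℝ :=
  (T : ℝ) * (∑ i : Fin N, ((1 / (T : ℝ)) * ∑ t, z i t) ^ 2)
    - ((N : ℝ) / (T : ℝ)) * (∑ t : Fin T, (1 / (N : ℝ)) * ∑ i, z i t) ^ 2
    + (N : ℝ) * ∑ t : Fin T, ((1 / (N : ℝ)) * ∑ i, z i t) ^ 2

lemma sq_sum_div_card_le_sum_sq {ι α : Type*} [Fintype ι] [Semifield α] [LinearOrder α]
    [IsStrictOrderedRing α] [ExistsAddOfLE α] (f : ι → α) :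
    (∑ i, f i) ^ 2 / Fintype.card ι ≤ ∑ i, f i ^ 2 :=
  div_le_of_le_mul₀ (Nat.cast_nonneg _) (sum_nonneg fun i _ => sq_nonneg (f i))
    (by simpa [mul_comm] using sq_sum_le_card_mul_sum_sq (s := univ) (f := f))

/-- Cauchy–Schwarz makes the last two terms of the objective nonnegative together. -/
lemma twoWayQF_nonneg (N T : ℕ) (z : Fin N → Fin T → ℝ) : 0 ≤ twoWayQF N T z := by
  have hunit : 0 ≤ (T : ℝ) * ∑ i : Fin N, ((1 / (T : ℝ)) * ∑ t, z i t) ^ 2 := by positivity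
  have htime : ((N : ℝ) / T) * (∑ t : Fin T, (1 / (N : ℝ)) * ∑ i, z i t) ^ 2
      ≤ (N : ℝ) * ∑ t : Fin T, ((1 / (N : ℝ)) * ∑ i, z i t) ^ 2 := by
    rw [div_mul_eq_mul_div, mul_div_assoc]
    gcongr
    simpa using sq_sum_div_card_le_sum_sq fun t : Fin T => (1 / (N : ℝ)) * ∑ i, z i t
  unfold twoWayQF
  linarith

lemma twoWayQF_eq_zero_of_balanced (N T : ℕ) (z : Fin N → Fin T → ℝ)
    (hω : ∀ t : Fin T, ((1 / (N : ℝ)) * ∑ i, z i t) = 0)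
    (hζ : ∀ i : Fin N, ((1 / (T : ℝ)) * ∑ t, z i t) = 0) :
    twoWayQF N T z = 0 := by
  simp only [twoWayQF, hω, hζ]
  simp

theorem reversible_two_way_optimal_general (N T : ℕ)
    (z : Fin N → Fin T → ℝ)
    (hω : ∀ t : Fin T, ((1 / (N : ℝ)) * ∑ i, z i t) = 0)
    (hζ : ∀ i : Fin N, ((1 / (T : ℝ)) * ∑ t, z i t) = 0) :
    ∀ z' : Fin N → Fin T → ℝ, (∀ i t, z' i t = 1 ∨ z' i t = -1) →
      twoWayQF N T z ≤ twoWayQF N T z' := by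
  intro z' _
  rw [twoWayQF_eq_zero_of_balanced N T z hω hζ]
  exact twoWayQF_nonneg N T z'

/-- Reversible treatment, two-way fixed effects: the objective
`zᵀΓ(ΓᵀΓ)⁻¹Γᵀz = T Σ_i ζ_i² − (N/T)(Σ_t ω_t)² + N Σ_t ω_t²` is minimized (over all
`±1`-valued designs, with no monotonicity constraint) by any design with `ω_t = 0`
for all `t` and `ζ_i = 0` for all `i`. -/
theorem reversible_two_way_optimal (N T : ℕ) (hN : 0 < N) (hT : 0 < T)
    (z : Fin N → Fin T → ℝ) (hz : ∀ i t, z i t = 1 ∨ z i t = -1)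
    (hω : ∀ t : Fin T, ((1 / (N : ℝ)) * ∑ i, z i t) = 0)
    (hζ : ∀ i : Fin N, ((1 / (T : ℝ)) * ∑ t, z i t) = 0) :
    ∀ z' : Fin N → Fin T → ℝ, (∀ i t, z' i t = 1 ∨ z' i t = -1) →
      twoWayQF N T z ≤ twoWayQF N T z' :=
  reversible_two_way_optimal_general N T z hω hζ
end

section
/- (Singular value thresholding solves nuclear-norm proximal step) Let Y ∈ ℝ^{N×T} have SVD Y = U D Vᵀ with singular values σ_1 ≥ ⋯ ≥ σ_{min(N,T)}. Then for μ > 0, the minimizer of (1/2)‖Y − L‖_F² + μ‖L‖_* over all matrices L is L̂ = U S_μ(D) Vᵀ, where S_μ(D) replaces each singular value σ_i by max(σ_i − μ, 0). -/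
/-!
Both terms of the objective are invariant under `L ↦ U L Vᵀ` for orthogonal `U`, `V`, so it
suffices to treat `Y = D`, which is supported on the diagonal. There the objective at the
thresholded matrix splits into scalar problems `½ (d - t)² + μ |t|`, each minimized at
`t = max (d - μ) 0` when `d ≥ 0`. For an arbitrary competitor `M`, discarding the
off-diagonal entries only lowers `‖D - M‖_F²`, and the diagonal of `M` satisfies
`∑ᵢ |Mᵢᵢ| ≤ ‖M‖_*`.
-/

open Finset Matrix

/-- Squared Frobenius norm `‖A‖_F² = Σ_{i,j} A_{ij}²`. -/
noncomputable def frobSq {N T : ℕ} (A : Matrix (Fin N) (Fin T) ℝ) : ℝ :=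
  ∑ i, ∑ j, A i j ^ 2

/-- The nuclear norm of a real matrix: the sum of its singular values, i.e. the sum of
the square roots of the eigenvalues of `LᴴL`. -/
noncomputable def nuclearNorm {N T : ℕ} (L : Matrix (Fin N) (Fin T) ℝ) : ℝ :=
  ∑ j, Real.sqrt ((Matrix.isHermitian_conjTranspose_mul_self L).eigenvalues j)

lemma Finset.sum_comp_le_univ_sum_of_injOn {ι κ M : Type*} [Fintype κ] [AddCommMonoid M]
    [Preorder M] [AddLeftMono M] {s : Finset ι} {g : ι → κ} (hg : Set.InjOn g s)
    {f : κ → M} (hf : ∀ k, 0 ≤ f k) : ∑ i ∈ s, f (g i) ≤ ∑ k, f k := by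
  classical
  rw [← sum_image hg]
  exact sum_le_univ_sum_of_nonneg hf

lemma Matrix.IsHermitian.sum_comp_eigenvalues_diagonal {n : Type*} [Fintype n] [DecidableEq n]
    {d : n → ℝ} (h : (diagonal d).IsHermitian) (F : ℝ → ℝ) :
    ∑ i, F (h.eigenvalues i) = ∑ i, F (d i) := by
  have hroots := h.roots_charpoly_eq_eigenvalues
  rw [charpoly_diagonal, Polynomial.roots_prod _ _ (prod_ne_zero_iff.2 fun i _ ↦
    Polynomial.X_sub_C_ne_zero (d i))] at hroots
  simp only [Polynomial.roots_X_sub_C, Multiset.bind_singleton, RCLike.ofReal_real_eq_id,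
    Function.id_comp] at hroots
  have := congr((Multiset.map F $hroots).sum)
  simp only [Multiset.map_map] at this
  exact this.symm

section

variable {N T : ℕ}

lemma conjTranspose_mul_self_orthogonal_conj {U : Matrix (Fin N) (Fin N) ℝ} (hU : Uᵀ * U = 1)
    (A : Matrix (Fin N) (Fin T) ℝ) (V : Matrix (Fin T) (Fin T) ℝ) :
    (U * A * Vᵀ)ᴴ * (U * A * Vᵀ) = V * (Aᴴ * A) * Vᵀ := by
  simp only [conjTranspose_eq_transpose_of_trivial, transpose_mul, transpose_transpose,
    Matrix.mul_assoc]
  rw [← Matrix.mul_assoc Uᵀ U, hU, Matrix.one_mul]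

lemma frobSq_eq_trace (A : Matrix (Fin N) (Fin T) ℝ) : frobSq A = (Aᴴ * A).trace := by
  rw [frobSq, sum_comm]
  simp [trace, mul_apply, sq]

lemma frobSq_orthogonal_conj {U : Matrix (Fin N) (Fin N) ℝ} {V : Matrix (Fin T) (Fin T) ℝ}
    (hU : Uᵀ * U = 1) (hV : Vᵀ * V = 1) (A : Matrix (Fin N) (Fin T) ℝ) :
    frobSq (U * A * Vᵀ) = frobSq A := by
  rw [frobSq_eq_trace, frobSq_eq_trace, conjTranspose_mul_self_orthogonal_conj hU,
    Matrix.mul_assoc, trace_mul_comm, Matrix.mul_assoc, hV, Matrix.mul_one]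

lemma nuclearNorm_orthogonal_conj {U : Matrix (Fin N) (Fin N) ℝ} {V : Matrix (Fin T) (Fin T) ℝ}
    (hU : Uᵀ * U = 1) (hV : Vᵀ * V = 1) (A : Matrix (Fin N) (Fin T) ℝ) :
    nuclearNorm (U * A * Vᵀ) = nuclearNorm A := by
  have hC : ((U * A * Vᵀ)ᴴ * (U * A * Vᵀ)).charpoly = (Aᴴ * A).charpoly := by
    rw [conjTranspose_mul_self_orthogonal_conj hU, Matrix.mul_assoc, charpoly_mul_comm,
      Matrix.mul_assoc, hV, Matrix.mul_one]
  unfold nuclearNorm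
  rw [((isHermitian_conjTranspose_mul_self _).eigenvalues_eq_eigenvalues_iff
    (isHermitian_conjTranspose_mul_self A)).2 hC]

lemma nuclearNorm_eq_sum_sqrt_of_gram_eq_diagonal {A : Matrix (Fin N) (Fin T) ℝ}
    {g : Fin T → ℝ} (h : Aᴴ * A = diagonal g) : nuclearNorm A = ∑ j, √(g j) := by
  have hg : (diagonal g).IsHermitian := h ▸ isHermitian_conjTranspose_mul_self A
  rw [nuclearNorm, ← hg.sum_comp_eigenvalues_diagonal,
    ((isHermitian_conjTranspose_mul_self A).eigenvalues_eq_eigenvalues_iff hg).2 (by rw [h])]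

lemma frobSq_eq_sum_prod (A : Matrix (Fin N) (Fin T) ℝ) :
    frobSq A = ∑ p : Fin N × Fin T, A p.1 p.2 ^ 2 :=
  (Fintype.sum_prod_type' _).symm

lemma sum_sq_le_frobSq (A : Matrix (Fin N) (Fin T) ℝ) (S : Finset (Fin N × Fin T)) :
    ∑ p ∈ S, A p.1 p.2 ^ 2 ≤ frobSq A :=
  frobSq_eq_sum_prod A ▸ sum_le_univ_sum_of_nonneg fun _ ↦ sq_nonneg _

lemma frobSq_eq_sum_of_support {A : Matrix (Fin N) (Fin T) ℝ} {S : Finset (Fin N × Fin T)}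
    (hA : ∀ p ∉ S, A p.1 p.2 = 0) : frobSq A = ∑ p ∈ S, A p.1 p.2 ^ 2 := by
  rw [frobSq_eq_sum_prod]
  exact (sum_subset (subset_univ S) fun p _ hp ↦ by simp [hA p hp]).symm

lemma sum_abs_le_nuclearNorm (M : Matrix (Fin N) (Fin T) ℝ) {S : Finset (Fin N × Fin T)}
    (h₁ : Set.InjOn Prod.fst (S : Set (Fin N × Fin T)))
    (h₂ : Set.InjOn Prod.snd (S : Set (Fin N × Fin T))) :
    ∑ p ∈ S, |M p.1 p.2| ≤ nuclearNorm M := by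
  set hG := isHermitian_conjTranspose_mul_self M
  set W : Matrix (Fin T) (Fin T) ℝ := (hG.eigenvectorUnitary : Matrix (Fin T) (Fin T) ℝ)
  have hstar : star W = Wᵀ := by rw [star_eq_conjTranspose, conjTranspose_eq_transpose_of_trivial]
  have hWWt : W * Wᵀ = 1 := hstar ▸ Unitary.coe_mul_star_self hG.eigenvectorUnitary
  have hWtW : Wᵀ * W = 1 := hstar ▸ Unitary.coe_star_mul_self hG.eigenvectorUnitary
  have hdiag : (M * W)ᵀ * (M * W) = diagonal hG.eigenvalues := by
    have h : star W * (Mᴴ * M) * W = diagonal hG.eigenvalues :=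
      hG.conjStarAlgAut_star_eigenvectorUnitary
    rw [← h, transpose_mul, hstar, conjTranspose_eq_transpose_of_trivial]
    simp only [Matrix.mul_assoc]
  have hW : ∀ j, ∑ b, W b j ^ 2 = 1 := fun j ↦ by
    simpa [sq, mul_apply] using congr_fun₂ hWtW j j
  have hP : ∀ j, ∑ a, (M * W) a j ^ 2 = hG.eigenvalues j := fun j ↦ by
    simpa [sq, mul_apply, mul_comm] using congr_fun₂ hdiag j j
  have hM : ∀ a b, M a b = ∑ j, (M * W) a j * W b j := fun a b ↦ by
    conv_lhs => rw [← Matrix.mul_one M, ← hWWt, ← Matrix.mul_assoc]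
    rfl
  -- `M = (M W) Wᵀ`, where column `j` of `M W` has norm `√λⱼ` and column `j` of `W` is a unit
  -- vector; Cauchy–Schwarz along `S` then bounds the contribution of each `j` by `√λⱼ`.
  calc ∑ p ∈ S, |M p.1 p.2|
      ≤ ∑ p ∈ S, ∑ j, |(M * W) p.1 j| * |W p.2 j| := sum_le_sum fun p _ ↦ by
        rw [hM]; exact (abs_sum_le_sum_abs _ _).trans_eq (by simp only [abs_mul])
    _ = ∑ j, ∑ p ∈ S, |(M * W) p.1 j| * |W p.2 j| := sum_comm
    _ ≤ ∑ j, √(∑ p ∈ S, |(M * W) p.1 j| ^ 2) * √(∑ p ∈ S, |W p.2 j| ^ 2) :=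
        sum_le_sum fun j _ ↦ Real.sum_mul_le_sqrt_mul_sqrt _ _ _
    _ ≤ ∑ j, √(hG.eigenvalues j) * √1 := by
        gcongr with j
        · rw [← hP]
          simpa only [sq_abs] using
            sum_comp_le_univ_sum_of_injOn h₁ fun a ↦ sq_nonneg ((M * W) a j)
        · rw [← hW j]
          simpa only [sq_abs] using sum_comp_le_univ_sum_of_injOn h₂ fun b ↦ sq_nonneg (W b j)
    _ = nuclearNorm M := by simp [nuclearNorm]

lemma nuclearNorm_eq_sum_abs_of_support {A : Matrix (Fin N) (Fin T) ℝ}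
    {S : Finset (Fin N × Fin T)} (h₁ : Set.InjOn Prod.fst (S : Set (Fin N × Fin T)))
    (h₂ : Set.InjOn Prod.snd (S : Set (Fin N × Fin T))) (hA : ∀ p ∉ S, A p.1 p.2 = 0) :
    nuclearNorm A = ∑ p ∈ S, |A p.1 p.2| := by
  refine le_antisymm ?_ (sum_abs_le_nuclearNorm A h₁ h₂)
  have hG : Aᴴ * A = diagonal fun j ↦ ∑ i, A i j ^ 2 := by
    ext j k
    rcases eq_or_ne j k with rfl | hjk
    · simp [mul_apply, sq]
    rw [diagonal_apply_ne _ hjk, mul_apply]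
    refine sum_eq_zero fun i _ ↦ ?_
    by_contra hne
    obtain ⟨hij, hik⟩ := mul_ne_zero_iff.1 hne
    have hj : (i, j) ∈ S := by by_contra h; exact hij (by simpa using hA (i, j) h)
    have hk : (i, k) ∈ S := by by_contra h; exact hik (hA (i, k) h)
    exact hjk (Prod.ext_iff.1 (h₁ hj hk rfl)).2
  calc nuclearNorm A = ∑ j, √(∑ i, |A i j| ^ 2) := by
        simp only [nuclearNorm_eq_sum_sqrt_of_gram_eq_diagonal hG, sq_abs]
    _ ≤ ∑ j, ∑ i, |A i j| := sum_le_sum fun j _ ↦ (Real.sqrt_le_left (by positivity)).2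
        (sum_sq_le_sq_sum_of_nonneg fun i _ ↦ abs_nonneg _)
    _ = ∑ p ∈ S, |A p.1 p.2| := by
        rw [sum_comm, ← Fintype.sum_prod_type']
        exact (sum_subset (subset_univ S) fun p _ hp ↦ by simp [hA p hp]).symm

lemma half_sq_sub_max_add_mul_le {d μ : ℝ} (hd : 0 ≤ d) (hμ : 0 ≤ μ) (t : ℝ) :
    1 / 2 * (d - max (d - μ) 0) ^ 2 + μ * max (d - μ) 0 ≤ 1 / 2 * (d - t) ^ 2 + μ * |t| := by
  have ht : t ≤ |t| := le_abs_self t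
  rcases le_total d μ with h | h
  · rw [max_eq_right (by linarith)]
    nlinarith [sq_nonneg t, mul_le_mul_of_nonneg_right h (abs_nonneg t),
      mul_le_mul_of_nonneg_left ht hd]
  · rw [max_eq_left (by linarith)]
    nlinarith [sq_nonneg (d - t - μ), mul_le_mul_of_nonneg_left ht hμ]

noncomputable def proxObjective (μ : ℝ) (Y L : Matrix (Fin N) (Fin T) ℝ) : ℝ :=
  1 / 2 * frobSq (Y - L) + μ * nuclearNorm L

lemma proxObjective_orthogonal_conj {U : Matrix (Fin N) (Fin N) ℝ}
    {V : Matrix (Fin T) (Fin T) ℝ} (hU : Uᵀ * U = 1) (hV : Vᵀ * V = 1) (μ : ℝ)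
    (Y L : Matrix (Fin N) (Fin T) ℝ) :
    proxObjective μ (U * Y * Vᵀ) (U * L * Vᵀ) = proxObjective μ Y L := by
  rw [proxObjective, ← Matrix.sub_mul, ← Matrix.mul_sub, frobSq_orthogonal_conj hU hV,
    nuclearNorm_orthogonal_conj hU hV, proxObjective]

lemma proxObjective_map_max_sub_le {S : Finset (Fin N × Fin T)}
    (h₁ : Set.InjOn Prod.fst (S : Set (Fin N × Fin T)))
    (h₂ : Set.InjOn Prod.snd (S : Set (Fin N × Fin T))) {D : Matrix (Fin N) (Fin T) ℝ}
    (hD : ∀ p ∉ S, D p.1 p.2 = 0) (hD₀ : ∀ i j, 0 ≤ D i j) {μ : ℝ} (hμ : 0 ≤ μ)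
    (M : Matrix (Fin N) (Fin T) ℝ) :
    proxObjective μ D (D.map fun x ↦ max (x - μ) 0) ≤ proxObjective μ D M := by
  have hDμ : ∀ p ∉ S, (D.map fun x ↦ max (x - μ) 0) p.1 p.2 = 0 := fun p hp ↦ by
    simp [hD p hp, hμ]
  calc proxObjective μ D (D.map fun x ↦ max (x - μ) 0)
      = ∑ p ∈ S, (1 / 2 * (D p.1 p.2 - max (D p.1 p.2 - μ) 0) ^ 2
          + μ * max (D p.1 p.2 - μ) 0) := by
        rw [proxObjective, frobSq_eq_sum_of_support (S := S) fun p hp ↦ by simp [hD p hp, hμ],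
          nuclearNorm_eq_sum_abs_of_support h₁ h₂ hDμ, mul_sum, mul_sum, ← sum_add_distrib]
        simp [abs_of_nonneg]
    _ ≤ ∑ p ∈ S, (1 / 2 * (D p.1 p.2 - M p.1 p.2) ^ 2 + μ * |M p.1 p.2|) :=
        sum_le_sum fun p _ ↦ half_sq_sub_max_add_mul_le (hD₀ _ _) hμ _
    _ = 1 / 2 * ∑ p ∈ S, (D - M) p.1 p.2 ^ 2 + μ * ∑ p ∈ S, |M p.1 p.2| := by
        simp [sum_add_distrib, mul_sum]
    _ ≤ proxObjective μ D M := by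
        unfold proxObjective
        gcongr
        · exact sum_sq_le_frobSq _ S
        · exact sum_abs_le_nuclearNorm M h₁ h₂

def diagPositions (N T : ℕ) : Finset (Fin N × Fin T) :=
  univ.filter fun p ↦ (p.1 : ℕ) = p.2

lemma mem_diagPositions {p : Fin N × Fin T} : p ∈ diagPositions N T ↔ (p.1 : ℕ) = p.2 := by
  simp [diagPositions]

lemma injOn_fst_diagPositions :
    Set.InjOn Prod.fst (diagPositions N T : Set (Fin N × Fin T)) := by
  rintro ⟨i, j⟩ hp ⟨i', j'⟩ hq (rfl : i = i')
  exact Prod.ext rfl (Fin.ext ((mem_diagPositions.1 hp).symm.trans (mem_diagPositions.1 hq)))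

lemma injOn_snd_diagPositions :
    Set.InjOn Prod.snd (diagPositions N T : Set (Fin N × Fin T)) := by
  rintro ⟨i, j⟩ hp ⟨i', j'⟩ hq (rfl : j = j')
  exact Prod.ext (Fin.ext ((mem_diagPositions.1 hp).trans (mem_diagPositions.1 hq).symm)) rfl

end

theorem svt_solves_nuclear_prox_general {N T : ℕ} (Y : Matrix (Fin N) (Fin T) ℝ)
    (U : Matrix (Fin N) (Fin N) ℝ) (V : Matrix (Fin T) (Fin T) ℝ)
    (hU : Uᵀ * U = 1) (hV : Vᵀ * V = 1)
    (s : ℕ → ℝ) (hs0 : ∀ i, 0 ≤ s i)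
    (D : Matrix (Fin N) (Fin T) ℝ)
    (hD : ∀ i j, D i j = if (i : ℕ) = (j : ℕ) then s (i : ℕ) else 0)
    (hY : Y = U * D * Vᵀ)
    (μ : ℝ) (hμ : 0 < μ)
    (Dμ : Matrix (Fin N) (Fin T) ℝ)
    (hDμ : ∀ i j, Dμ i j = if (i : ℕ) = (j : ℕ) then max (s (i : ℕ) - μ) 0 else 0)
    (Lhat : Matrix (Fin N) (Fin T) ℝ) (hLhat : Lhat = U * Dμ * Vᵀ) :
    ∀ L : Matrix (Fin N) (Fin T) ℝ,
      (1 / 2) * frobSq (Y - Lhat) + μ * nuclearNorm Lhat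
        ≤ (1 / 2) * frobSq (Y - L) + μ * nuclearNorm L := by
  intro L
  have hL : L = U * (Uᵀ * L * V) * Vᵀ := by
    rw [← Matrix.mul_assoc, ← Matrix.mul_assoc, mul_eq_one_comm.1 hU, Matrix.one_mul,
      Matrix.mul_assoc, mul_eq_one_comm.1 hV, Matrix.mul_one]
  have hDμD : Dμ = D.map fun x ↦ max (x - μ) 0 := by
    ext i j
    rw [hDμ, map_apply, hD]
    split_ifs <;> simp [hμ.le]
  change proxObjective μ Y Lhat ≤ proxObjective μ Y L
  rw [hL, hY, hLhat, hDμD, proxObjective_orthogonal_conj hU hV,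
    proxObjective_orthogonal_conj hU hV]
  refine proxObjective_map_max_sub_le injOn_fst_diagPositions injOn_snd_diagPositions
    (fun p hp ↦ ?_) (fun i j ↦ ?_) hμ.le _
  · rw [hD, if_neg (mt mem_diagPositions.2 hp)]
  · rw [hD]
    split_ifs
    exacts [hs0 _, le_rfl]

/-- Singular value thresholding solves the nuclear-norm proximal step: if `Y = U D Vᵀ`
is an SVD with nonincreasing nonnegative singular values `s`, then for `μ > 0` the
matrix `L̂ = U S_μ(D) Vᵀ` (soft-thresholding each singular value to `max(s_i − μ, 0)`)
minimizes `(1/2)‖Y − L‖_F² + μ‖L‖_*` over all matrices `L`. -/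
theorem svt_solves_nuclear_prox {N T : ℕ} (Y : Matrix (Fin N) (Fin T) ℝ)
    (U : Matrix (Fin N) (Fin N) ℝ) (V : Matrix (Fin T) (Fin T) ℝ)
    (hU : Uᵀ * U = 1) (hV : Vᵀ * V = 1)
    (s : ℕ → ℝ) (hs0 : ∀ i, 0 ≤ s i) (hsmono : ∀ i j, i ≤ j → s j ≤ s i)
    (D : Matrix (Fin N) (Fin T) ℝ)
    (hD : ∀ i j, D i j = if (i : ℕ) = (j : ℕ) then s (i : ℕ) else 0)
    (hY : Y = U * D * Vᵀ)
    (μ : ℝ) (hμ : 0 < μ)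
    (Dμ : Matrix (Fin N) (Fin T) ℝ)
    (hDμ : ∀ i j, Dμ i j = if (i : ℕ) = (j : ℕ) then max (s (i : ℕ) - μ) 0 else 0)
    (Lhat : Matrix (Fin N) (Fin T) ℝ) (hLhat : Lhat = U * Dμ * Vᵀ) :
    ∀ L : Matrix (Fin N) (Fin T) ℝ,
      (1 / 2) * frobSq (Y - Lhat) + μ * nuclearNorm Lhat
        ≤ (1 / 2) * frobSq (Y - L) + μ * nuclearNorm L :=
  svt_solves_nuclear_prox_general Y U V hU hV s hs0 D hD hY μ hμ Dμ hDμ Lhat hLhat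
end
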